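/- Let K be an m×n real matrix such that KKᵀ ⪰ μ·Iₘ for some μ > 0, and let p > 0. Then the block matrix [[(1+p)·Iₙ, Kᵀ], [K, KKᵀ]] satisfies [[(1+p)·Iₙ, Kᵀ], [K, KKᵀ]] ⪰ (μp/(μ+p+1)) · I_{n+m}. -/

import Mathlib

open Matrix

/-- The spectral (operator 2-) norm of a real matrix. -/
noncomputable def opNorm {m n : ℕ} (K : Matrix (Fin m) (Fin n) ℝ) : ℝ :=
  ‖LinearMap.toContinuousLinearMap (Matrix.toEuclideanLin K)‖

/-!
Subtracting `c • 1` with `c = μ p / (μ + p + 1) < p` leaves the invertible block `(1 + p - c) • 1`,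
so by the Schur complement the claim is `(1 - (1 + p - c)⁻¹) • K Kᵀ - c • 1 ⪰ 0`. As `K Kᵀ ⪰ μ • 1`,
this reduces to the scalar inequality `c ≤ (1 - (1 + p - c)⁻¹) μ`, which the choice of `c` makes
equivalent to `0 ≤ c ^ 2`.
-/

namespace Matrix

variable {l m 𝕜 : Type*}

theorem fromBlocks_sub_smul_one [Ring 𝕜] [DecidableEq l] [DecidableEq m]
    (A : Matrix l l 𝕜) (B : Matrix l m 𝕜) (C : Matrix m l 𝕜) (D : Matrix m m 𝕜) (c : 𝕜) :
    fromBlocks A B C D - c • 1 = fromBlocks (A - c • 1) B C (D - c • 1) := by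
  rw [← fromBlocks_one, fromBlocks_smul, sub_eq_add_neg, fromBlocks_neg, fromBlocks_add]
  simp [sub_eq_add_neg]

theorem posSemidef_fromBlocks_smul_one_iff [Field 𝕜] [PartialOrder 𝕜] [IsOrderedRing 𝕜]
    [StarRing 𝕜] [StarOrderedRing 𝕜] [Fintype l] [Fintype m] [DecidableEq l]
    {a : 𝕜} (ha : 0 < a) (B : Matrix l m 𝕜) (D : Matrix m m 𝕜) :
    (fromBlocks (a • 1) B Bᴴ D).PosSemidef ↔ (D - a⁻¹ • (Bᴴ * B)).PosSemidef := by
  have hinv : (a • 1 : Matrix l l 𝕜) * (a⁻¹ • 1) = 1 := by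
    rw [smul_mul_smul_comm, mul_inv_cancel₀ ha.ne', one_mul, one_smul]
  have := invertibleOfRightInverse _ _ hinv
  rw [PosDef.fromBlocks₁₁ B D (PosDef.one.smul ha), inv_eq_right_inv hinv, Matrix.mul_smul,
    Matrix.mul_one, Matrix.smul_mul]

theorem PosSemidef.smul_sub_smul_one [CommRing 𝕜] [PartialOrder 𝕜] [IsOrderedRing 𝕜]
    [StarRing 𝕜] [StarOrderedRing 𝕜] [Fintype m] [DecidableEq m] {A : Matrix m m 𝕜}
    {μ s t : 𝕜} (hA : (A - μ • 1).PosSemidef) (hs : 0 ≤ s) (hst : t ≤ s * μ) :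
    (s • A - t • 1).PosSemidef := by
  have h : s • A - t • 1 = s • (A - μ • 1) + (s * μ - t) • 1 := by module
  rw [h]
  exact (hA.smul hs).add (PosSemidef.one.smul (sub_nonneg.mpr hst))

end Matrix

theorem le_one_sub_inv_mul_of_mul_eq {𝕜 : Type*} [Field 𝕜] [LinearOrder 𝕜]
    [IsStrictOrderedRing 𝕜]
    {μ p c : 𝕜} (hc : c * (μ + p + 1) = μ * p) (hcp : c < p) :
    c ≤ (1 - (1 + p - c)⁻¹) * μ := by
  have ha : 0 < 1 + p - c := by linarith
  have h : (1 - (1 + p - c)⁻¹) * μ - c = c ^ 2 / (1 + p - c) := by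
    field_simp
    linear_combination -hc
  linarith [h ▸ div_nonneg (sq_nonneg c) ha.le]

theorem stmt1 {m n : ℕ} (K : Matrix (Fin m) (Fin n) ℝ) (μ p : ℝ)
    (hμ : 0 < μ) (hp : 0 < p)
    (hK : (K * Kᵀ - μ • 1).PosSemidef) :
    (Matrix.fromBlocks ((1 + p) • (1 : Matrix (Fin n) (Fin n) ℝ)) Kᵀ K (K * Kᵀ)
      - (μ * p / (μ + p + 1)) • 1).PosSemidef := by
  set c := μ * p / (μ + p + 1)
  have hc : c * (μ + p + 1) = μ * p := div_mul_cancel₀ _ (by positivity)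
  have hcp : c < p := (div_lt_iff₀ (by positivity)).mpr (by nlinarith)
  have ha : 1 ≤ 1 + p - c := by linarith
  have hschur := posSemidef_fromBlocks_smul_one_iff (by linarith : (0 : ℝ) < 1 + p - c) Kᵀ
    (K * Kᵀ - c • 1)
  simp only [conjTranspose_eq_transpose_of_trivial, transpose_transpose] at hschur
  rw [fromBlocks_sub_smul_one, ← sub_smul, hschur,
    show K * Kᵀ - c • 1 - (1 + p - c)⁻¹ • (K * Kᵀ) = (1 - (1 + p - c)⁻¹) • (K * Kᵀ) - c • 1 by
      module]
  exact hK.smul_sub_smul_one (sub_nonneg.mpr (inv_le_one_of_one_le₀ ha))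
    (le_one_sub_inv_mul_of_mul_eq hc hcp)
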